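/- arXiv:2011.05465 — 3 statements merged into one kernel-verified Lean document; each statement's English description precedes it below -/
import Mathlib

section
/- Let X be a separable metrizable space that is {A_s : s ∈ S}-cohesive, witnessed by a base ℬ of open sets (i.e., every point of X has a neighborhood U ∈ ℬ such that U contains no nonempty proper clopen subset of any A_s). Let 𝒜 = { φₙ[A_{s₁} × ⋯ × A_{sₙ}] : n ∈ ℕ, s₁,…,sₙ ∈ S }, viewed as a collection of subsets of ℱ(X). Then ℱ(X) is 𝒜-cohesive, and the witnessing open neighborhoods may be taken from the collection 𝒞 = { ⟨U₁,…,Uₙ⟩ : n ∈ ℕ, U₁,…,Uₙ ∈ ℬ }. -/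
/-! Given `F = {x₁, …, x_k}`, shrink cohesion witnesses at the
`xᵢ` to pairwise disjoint basic sets `Uᵢ`. Let `C` be a nonempty clopen subset of
`P = φ_m[A_{s₁} × ⋯ × A_{s_m}]` inside `⟨U₁, …, U_k⟩`, and `φ(f) ∈ C`. Moving only the
`i`-th coordinate of `f` through `A_{sᵢ}`, the points `y` with `φ(f[i ↦ y]) ∈ C` form a
clopen subset of `A_{sᵢ}` covered by the disjoint open `Uⱼ`; its piece in the `Uⱼ` containing
`f i` is therefore still clopen, and being a subset of a witness it is all of `A_{sᵢ}`.
So `C` is stable under changing one coordinate, and changing the coordinates one at a time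
reaches every point of `P`. -/

open Set Topology Filter

/-- The Vietoris topology on `Set X` induced by a topology `t` on `X`, generated by the
subbasic sets `{F | F ⊆ U}` and `{F | F ∩ U ≠ ∅}` for `U` open in `t`. -/
def vietoris {X : Type*} (t : TopologicalSpace X) : TopologicalSpace (Set X) :=
  TopologicalSpace.generateFrom
    {S | (∃ U : Set X, IsOpen[t] U ∧ S = {F : Set X | F ⊆ U}) ∨
         (∃ U : Set X, IsOpen[t] U ∧ S = {F : Set X | (F ∩ U).Nonempty})}

/-- `ℱ(X)`: the hyperspace of nonempty finite subsets of `X`. -/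
def FinHyp (X : Type*) : Type _ := {F : Set X // F.Finite ∧ F.Nonempty}

noncomputable instance FinHyp.instCoeOut {X : Type*} : CoeOut (FinHyp X) (Set X) :=
  ⟨Subtype.val⟩

/-- `ℱ(X)` carries the (subspace) Vietoris topology. -/
instance FinHyp.instTopologicalSpace {X : Type*} [t : TopologicalSpace X] :
    TopologicalSpace (FinHyp X) :=
  (vietoris t).induced Subtype.val

/-- `C` is a nonempty proper clopen subset of `A` means: `C ⊆ A` and `C` is clopen in the
subspace topology of `A`. -/
def ClopenIn {Y : Type*} [TopologicalSpace Y] (A C : Set Y) : Prop :=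
  C ⊆ A ∧ IsClopen {y : A | (y : Y) ∈ C}

/-- `φₙ[A 0 × ⋯ × A (n-1)]`, the image under `φₙ(x₁,…,xₙ) = {x₁,…,xₙ}` of a product of
subsets of `X`, viewed as a subset of `ℱ(X)`. -/
def phiImg {X : Type*} (n : ℕ) (A : Fin n → Set X) : Set (FinHyp X) :=
  {F | ∃ f : Fin n → X, (∀ i, f i ∈ A i) ∧ (F : Set X) = Set.range f}

/-- The basic Vietoris set `⟨U 0, …, U (k-1)⟩`, viewed as a subset of `ℱ(X)`. -/
def vBasic {X : Type*} (k : ℕ) (U : Fin k → Set X) : Set (FinHyp X) :=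
  {F | (F : Set X) ⊆ ⋃ i, U i ∧ ∀ i, ((F : Set X) ∩ U i).Nonempty}

open Function TopologicalSpace

theorem vietoris_eq_vietoris {X : Type*} [t : TopologicalSpace X] :
    vietoris t = TopologicalSpace.vietoris X := by
  unfold vietoris TopologicalSpace.vietoris
  congr 1
  ext S
  simp only [mem_ofPred_eq, mem_union, mem_image, powerset, eq_comm]

section FinHyp

attribute [local instance] TopologicalSpace.vietoris

variable {X : Type*}

theorem mem_vBasic_of_eq_range {k : ℕ} {U : Fin k → Set X} {F : FinHyp X} {x : Fin k → X}
    (hF : (F : Set X) = Set.range x) (hx : ∀ i, x i ∈ U i) : F ∈ vBasic k U := by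
  refine ⟨?_, fun i => ⟨x i, hF ▸ mem_range_self i, hx i⟩⟩
  rw [hF, range_subset_iff]
  exact fun i => mem_iUnion_of_mem i (hx i)

def FinHyp.range {ι : Type*} [Finite ι] [Nonempty ι] (f : ι → X) : FinHyp X :=
  ⟨Set.range f, finite_range f, range_nonempty f⟩

variable [TopologicalSpace X]

theorem FinHyp.isInducing_val : IsInducing (X := FinHyp X) Subtype.val :=
  ⟨by rw [← vietoris_eq_vietoris]; rfl⟩

theorem FinHyp.continuous_range {ι : Type*} [Finite ι] [Nonempty ι] :
    Continuous (FinHyp.range : (ι → X) → FinHyp X) :=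
  FinHyp.isInducing_val.continuous_iff.2 (vietoris.continuous_range_of_finite (ι := ι) (α := X))

theorem vBasic_isOpen {k : ℕ} {U : Fin k → Set X} (hU : ∀ i, IsOpen (U i)) :
    IsOpen (vBasic k U) := by
  have hopen : IsOpen ((⋃ i, U i).powerset ∩ ⋂ i, {G : Set X | (G ∩ U i).Nonempty}) :=
    (isOpen_iUnion hU).powerset_vietoris.inter
      (isOpen_iInter_of_finite fun i => vietoris.isOpen_inter_nonempty_of_isOpen (hU i))
  have hval : vBasic k U =
      Subtype.val ⁻¹' ((⋃ i, U i).powerset ∩ ⋂ i, {G : Set X | (G ∩ U i).Nonempty}) := by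
    ext F
    exact and_congr Iff.rfl (mem_iInter (s := fun i => {G : Set X | (G ∩ U i).Nonempty})).symm
  rw [hval]
  exact hopen.preimage FinHyp.isInducing_val.continuous

end FinHyp

section Clopen

variable {Y Z : Type*} [TopologicalSpace Y] [TopologicalSpace Z]

theorem ClopenIn.preimage {A : Set Y} {B C : Set Z} (hC : ClopenIn B C) {g : Y → Z}
    (hg : Continuous g) (hAB : MapsTo g A B) : ClopenIn A (A ∩ g ⁻¹' C) :=
  ⟨inter_subset_left, by
    simpa [preimage, MapsTo.restrict, Subtype.map] using hC.2.preimage (hg.restrict hAB)⟩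

theorem IsClopen.inter_of_subset_iUnion {ι : Type*} {D : Set Y} {U : ι → Set Y}
    (hD : IsClopen D) (hU : ∀ i, IsOpen (U i)) (hdisj : Pairwise (Disjoint on U))
    (hDU : D ⊆ ⋃ i, U i) (i : ι) : IsClopen (D ∩ U i) := by
  refine ⟨?_, hD.isOpen.inter (hU i)⟩
  have : D ∩ U i = D \ ⋃ j ∈ {j | j ≠ i}, U j := by
    ext y
    simp only [mem_inter_iff, Set.mem_sdiff, mem_iUnion, mem_ofPred_eq, exists_prop, not_exists,
      not_and]
    refine ⟨fun ⟨hyD, hyi⟩ => ⟨hyD, fun j hji hyj => (hdisj hji).ne_of_mem hyj hyi rfl⟩,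
      fun ⟨hyD, hy⟩ => ⟨hyD, ?_⟩⟩
    obtain ⟨j, hyj⟩ := mem_iUnion.1 (hDU hyD)
    by_contra hyi
    exact hy j (fun hji => hyi (hji ▸ hyj)) hyj
  rw [this]
  exact hD.isClosed.sdiff (isOpen_biUnion fun j _ => hU j)

end Clopen

section Cohesion

variable {Y : Type*} [TopologicalSpace Y]

def NoProperClopenIn (A U : Set Y) : Prop :=
  ∀ C : Set Y, ClopenIn A C → C.Nonempty → C ≠ A → ¬ C ⊆ U

theorem NoProperClopenIn.mono {A U V : Set Y} (h : NoProperClopenIn A U) (hVU : V ⊆ U) :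
    NoProperClopenIn A V :=
  fun C hC hne hCA hCV => h C hC hne hCA (hCV.trans hVU)

theorem NoProperClopenIn.eq_of_subset {A U C : Set Y} (h : NoProperClopenIn A U)
    (hC : ClopenIn A C) (hne : C.Nonempty) (hCU : C ⊆ U) : C = A :=
  by_contra fun hCA => h C hC hne hCA hCU

theorem ClopenIn.eq_of_subset_iUnion {ι : Type*} {A C : Set Y} {U : ι → Set Y}
    (hC : ClopenIn A C) (hne : C.Nonempty) (hU : ∀ i, IsOpen (U i))
    (hdisj : Pairwise (Disjoint on U)) (hCU : C ⊆ ⋃ i, U i)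
    (hUA : ∀ i, NoProperClopenIn A (U i)) : C = A := by
  obtain ⟨y, hyC⟩ := hne
  obtain ⟨i, hyi⟩ := mem_iUnion.1 (hCU hyC)
  have hCi : ClopenIn A (C ∩ U i) :=
    ⟨inter_subset_left.trans hC.1,
      hC.2.inter_of_subset_iUnion (fun j => (hU j).preimage continuous_subtype_val)
        (hdisj.mono fun _ _ h => h.preimage _) (fun z hz => by simpa using hCU hz) i⟩
  have hCiA : C ∩ U i = A := (hUA i).eq_of_subset hCi ⟨y, hyC, hyi⟩ inter_subset_right
  exact hC.1.antisymm (hCiA ▸ inter_subset_left)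

end Cohesion

theorem Set.induction_univ_pi_update {ι : Type*} [Fintype ι] [DecidableEq ι] {α : ι → Type*}
    {A : ∀ i, Set (α i)} {p : (∀ i, α i) → Prop}
    (hstep : ∀ f ∈ univ.pi A, p f → ∀ i, ∀ x ∈ A i, p (update f i x))
    {f g : ∀ i, α i} (hf : f ∈ univ.pi A) (hg : g ∈ univ.pi A) (hpf : p f) : p g := by
  suffices ∀ s : Finset ι, p (s.piecewise g f) by simpa using this Finset.univ
  intro s
  induction s using Finset.induction_on with
  | empty => simpa using hpf
  | insert i s _ ih =>
    rw [Finset.piecewise_insert]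
    exact hstep _ (s.piecewise_mem_set_pi hg hf) ih i (g i) (hg i trivial)

section Hyperspace

variable {X : Type*} [TopologicalSpace X] {m k : ℕ} {A : Fin m → Set X} {U : Fin k → Set X}
  {C : Set (FinHyp X)}

theorem range_update_mem_of_clopenIn_subset_vBasic (hU : ∀ j, IsOpen (U j))
    (hdisj : Pairwise (Disjoint on U)) (hUA : ∀ i j, NoProperClopenIn (A i) (U j))
    (hC : ClopenIn (phiImg m A) C) (hCU : C ⊆ vBasic k U) [Nonempty (Fin m)]
    {f : Fin m → X} (hf : f ∈ univ.pi A) (hfC : FinHyp.range f ∈ C) (i : Fin m)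
    {y : X} (hy : y ∈ A i) : FinHyp.range (update f i y) ∈ C := by
  set T := A i ∩ (fun y => FinHyp.range (update f i y)) ⁻¹' C
  have hT : ClopenIn (A i) T :=
    hC.preimage (FinHyp.continuous_range.comp (continuous_const.update i continuous_id))
      fun z hz => ⟨_, fun j => (update_mem_pi_iff_of_mem hf).2 (fun _ => hz) j trivial, rfl⟩
  have hfT : f i ∈ T := ⟨hf i trivial, by simpa using hfC⟩
  have hTU : T ⊆ ⋃ j, U j := fun z hz => (hCU hz.2).1 ⟨i, update_self i z f⟩
  have hTA : T = A i := hT.eq_of_subset_iUnion ⟨f i, hfT⟩ hU hdisj hTU (hUA i)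
  exact (hTA.symm ▸ hy : y ∈ T).2

theorem eq_phiImg_of_clopenIn_subset_vBasic (hU : ∀ j, IsOpen (U j))
    (hdisj : Pairwise (Disjoint on U)) (hUA : ∀ i j, NoProperClopenIn (A i) (U j))
    (hC : ClopenIn (phiImg m A) C) (hne : C.Nonempty) (hCU : C ⊆ vBasic k U) :
    C = phiImg m A := by
  obtain ⟨G, hG⟩ := hne
  obtain ⟨f, hf, hGf⟩ := hC.1 hG
  have : Nonempty (Fin m) := range_nonempty_iff_nonempty.1 (hGf ▸ G.2.2)
  have hfC : FinHyp.range f ∈ C := (Subtype.ext hGf : G = FinHyp.range f) ▸ hG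
  refine hC.1.antisymm fun G' ⟨g, hg, hG'g⟩ => ?_
  rw [(Subtype.ext hG'g : G' = FinHyp.range g)]
  exact Set.induction_univ_pi_update
    (fun _ hf hfC i _ hy =>
      range_update_mem_of_clopenIn_subset_vBasic hU hdisj hUA hC hCU hf hfC i hy)
    (fun i _ => hf i) (fun i _ => hg i) hfC

end Hyperspace

theorem exists_pairwise_disjoint_noProperClopenIn {X ι S : Type*} [TopologicalSpace X]
    [T2Space X] [Finite ι] {A : S → Set X} {ℬ : Set (Set X)} (hℬ : IsTopologicalBasis ℬ)
    (hcoh : ∀ x : X, ∃ U ∈ ℬ, x ∈ U ∧ ∀ s, NoProperClopenIn (A s) U)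
    {x : ι → X} (hx : Injective x) :
    ∃ U : ι → Set X, (∀ i, U i ∈ ℬ ∧ x i ∈ U i ∧ ∀ s, NoProperClopenIn (A s) (U i)) ∧
      Pairwise (Disjoint on U) := by
  obtain ⟨O, hO, hOd⟩ := (finite_range x).t2_separation
  have hsel : ∀ i, ∃ V ∈ ℬ, x i ∈ V ∧ V ⊆ O (x i) ∧ ∀ s, NoProperClopenIn (A s) V := by
    intro i
    obtain ⟨W, hWℬ, hxW, hW⟩ := hcoh (x i)
    obtain ⟨V, hVℬ, hxV, hVWO⟩ := hℬ.exists_subset_of_mem_open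
      (show x i ∈ W ∩ O (x i) from ⟨hxW, (hO (x i)).1⟩)
      ((hℬ.isOpen hWℬ).inter (hO (x i)).2)
    exact ⟨V, hVℬ, hxV, hVWO.trans inter_subset_right,
      fun s => (hW s).mono (hVWO.trans inter_subset_left)⟩
  choose V hVℬ hxV hVO hV using hsel
  exact ⟨V, fun i => ⟨hVℬ i, hxV i, hV i⟩, fun i j hij =>
    (hOd (mem_range_self i) (mem_range_self j) (hx.ne hij)).mono (hVO i) (hVO j)⟩

theorem finHyp_cohesive_general {X S : Type*} [TopologicalSpace X]
    [TopologicalSpace.MetrizableSpace X]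
    (A : S → Set X) (ℬ : Set (Set X))
    (hbase : TopologicalSpace.IsTopologicalBasis ℬ)
    (hcoh : ∀ x : X, ∃ U ∈ ℬ, x ∈ U ∧
      ∀ s : S, ∀ C : Set X, ClopenIn (A s) C → C.Nonempty → C ≠ A s → ¬ C ⊆ U) :
    ∀ F : FinHyp X, ∃ (k : ℕ) (U : Fin k → Set X), (∀ i, U i ∈ ℬ) ∧
      F ∈ vBasic k U ∧ IsOpen (vBasic k U) ∧
      ∀ (m : ℕ) (s : Fin m → S), ∀ C : Set (FinHyp X),
        ClopenIn (phiImg m (fun i => A (s i))) C → C.Nonempty →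
        C ≠ phiImg m (fun i => A (s i)) → ¬ C ⊆ vBasic k U := by
  intro F
  obtain ⟨k, x, hx, hxF⟩ := F.2.1.fin_param
  obtain ⟨U, hU, hdisj⟩ := exists_pairwise_disjoint_noProperClopenIn hbase hcoh hx
  have hUo : ∀ i, IsOpen (U i) := fun i => hbase.isOpen (hU i).1
  refine ⟨k, U, fun i => (hU i).1, mem_vBasic_of_eq_range hxF.symm fun i => (hU i).2.1,
    vBasic_isOpen hUo, fun m s C hC hne hCA hCU => hCA ?_⟩
  exact eq_phiImg_of_clopenIn_subset_vBasic hUo hdisj (fun i j => (hU j).2.2 (s i)) hC hne hCU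

/-- If a separable metrizable space `X` is `{A s : s ∈ S}`-cohesive, witnessed by a base `ℬ`
of open sets, then `ℱ(X)` is `𝒜`-cohesive where
`𝒜 = {φₙ[A s₁ × ⋯ × A sₙ] : n ∈ ℕ, s₁,…,sₙ ∈ S}`, and the witnessing open neighborhoods
may be taken to be basic Vietoris sets `⟨U₁,…,U_k⟩` with all `Uᵢ ∈ ℬ`. -/
theorem finHyp_cohesive {X S : Type*} [TopologicalSpace X]
    [TopologicalSpace.SeparableSpace X] [TopologicalSpace.MetrizableSpace X]
    (A : S → Set X) (ℬ : Set (Set X))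
    (hbase : TopologicalSpace.IsTopologicalBasis ℬ)
    (hcoh : ∀ x : X, ∃ U ∈ ℬ, x ∈ U ∧
      ∀ s : S, ∀ C : Set X, ClopenIn (A s) C → C.Nonempty → C ≠ A s → ¬ C ⊆ U) :
    ∀ F : FinHyp X, ∃ (k : ℕ) (U : Fin k → Set X), (∀ i, U i ∈ ℬ) ∧
      F ∈ vBasic k U ∧ IsOpen (vBasic k U) ∧
      ∀ (m : ℕ) (s : Fin m → S), ∀ C : Set (FinHyp X),
        ClopenIn (phiImg m (fun i => A (s i))) C → C.Nonempty →
        C ≠ phiImg m (fun i => A (s i)) → ¬ C ⊆ vBasic k U :=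
  finHyp_cohesive_general A ℬ hbase hcoh
end

section
/- Let X be a separable metrizable space and let (X_s)_{s∈T} be a Sierpiński stratification of X. Fix n ∈ ℕ and let Tⁿ = { s₁*⋯*sₙ : s₁,…,sₙ ∈ T and |s₁| = ⋯ = |sₙ| } be the tree whose nodes are n-tuples of equal-length nodes of T (ordered coordinatewise, so that a node extends another iff each coordinate extends the corresponding coordinate). For s₁*⋯*sₙ ∈ Tⁿ set H_{s₁*⋯*sₙ} = φₙ[X_{s₁} × ⋯ × X_{sₙ}] ⊆ ℱₙ(X). Then (H_t)_{t∈Tⁿ} is a Sierpiński stratification of ℱₙ(X). -/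
open Set Topology Filter

/-- `ℱₙ(X)`: the hyperspace of nonempty subsets of `X` of cardinality at most `n`. -/
def FinHypN (n : ℕ) (X : Type*) : Type _ := {F : Set X // F.Nonempty ∧ F.encard ≤ n}

noncomputable instance FinHypN.instCoeOut {n : ℕ} {X : Type*} : CoeOut (FinHypN n X) (Set X) :=
  ⟨Subtype.val⟩

/-- `ℱₙ(X)` carries the (subspace) Vietoris topology. -/
instance FinHypN.instTopologicalSpace {n : ℕ} {X : Type*} [t : TopologicalSpace X] :
    TopologicalSpace (FinHypN n X) :=
  (vietoris t).induced Subtype.val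

/-- `(Xs s)_{s ∈ T}` is a Sierpiński stratification of the space `X`:
`T` is a nonempty tree over a countable alphabet `A` (a nonempty, prefix-closed set of
finite sequences), each `Xs s` is closed, `Xs ∅ = X`, each `Xs s` is the union of the
`Xs t` for `t` an immediate successor of `s` in `T`, and along every infinite branch the
sets converge to a point. -/
structure IsSierpinskiStratification {X : Type*} [TopologicalSpace X] {A : Type*}
    (T : Set (List A)) (Xs : List A → Set X) : Prop where
  countable_alphabet : Countable A
  nonempty : T.Nonempty
  prefix_closed : ∀ l ∈ T, ∀ l' : List A, l' <+: l → l' ∈ T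
  isClosed : ∀ s ∈ T, IsClosed (Xs s)
  root : Xs [] = Set.univ
  succ_eq : ∀ s ∈ T, Xs s = ⋃ t ∈ {t | t ∈ T ∧ ∃ a : A, t = s ++ [a]}, Xs t
  branch_converges : ∀ σ : ℕ → A, (∀ k : ℕ, (List.range k).map σ ∈ T) →
    ∃ p : X, ∀ V ∈ nhds p, ∀ᶠ k in Filter.atTop, Xs ((List.range k).map σ) ⊆ V

/-!
The products `X_{s₁} × ⋯ × X_{sₙ}`, indexed by `Tⁿ`, form a Sierpiński stratification of `Xⁿ`:
everything is checked coordinatewise, and a branch of `Tⁿ` is an `n`-tuple of branches of `T`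
whose strata converge in each coordinate, hence in the product. The sets `H_t` are the images of
these products under `φₙ`, a continuous surjection `Xⁿ → ℱₙ(X)`, and such images inherit every
condition except closedness. That one holds because `X` is Hausdorff: if `F ∉ φₙ[C₁ × ⋯ × Cₙ]`
with the `Cᵢ` closed, pick pairwise disjoint open `U_x ∋ x` for `x ∈ F`, each avoiding the `Cᵢ`
that miss `x`; no `φₙ(f)` in the Vietoris neighbourhood `⟨U_x : x ∈ F⟩` of `F` has `f ∈ ∏ Cᵢ`,
since the points `x ∈ F` with `fᵢ ∈ U_x` would then form a tuple in `∏ Cᵢ` with range `F`.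
-/

attribute [local instance] TopologicalSpace.vietoris

theorem vietoris_eq_topologicalSpace_vietoris (X : Type*) [t : TopologicalSpace X] :
    vietoris t = TopologicalSpace.vietoris X := by
  unfold vietoris TopologicalSpace.vietoris
  congr 1
  ext S
  simp [powerset, eq_comm]

theorem Filter.Tendsto.univ_pi_smallSets {ι β : Type*} {X : ι → Type*}
    [∀ i, TopologicalSpace (X i)] {l : Filter β} {C : β → ∀ i, Set (X i)} {p : ∀ i, X i}
    (h : ∀ i, Tendsto (fun k => C k i) l (𝓝 (p i)).smallSets) :
    Tendsto (fun k => univ.pi (C k)) l (𝓝 p).smallSets := by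
  simp only [nhds_pi, Filter.pi, smallSets_iInf, smallSets_comap_eq_comap_image, tendsto_iInf,
    tendsto_comap_iff]
  exact fun i => (h i).smallSets_mono (Eventually.of_forall fun _ => eval_image_univ_pi_subset)

namespace TopologicalSpace.vietoris

variable {X : Type*} [TopologicalSpace X]

theorem compl_image_range_pi_mem_nhds [T2Space X] {ι : Type*} [Finite ι] {C : ι → Set X}
    (hC : ∀ i, IsClosed (C i)) {F : Set X} (hF : F.Finite) (hFC : F ∉ range '' univ.pi C) :
    (range '' univ.pi C)ᶜ ∈ 𝓝 F := by
  obtain ⟨U, hU, hdisj⟩ := hF.t2_separation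
  set V : X → Set X := fun x => U x \ ⋃ i ∈ {i | x ∉ C i}, C i
  have hV : ∀ x, IsOpen (V x) := fun x =>
    (hU x).2.sdiff ((toFinite _).isClosed_biUnion fun i _ => hC i)
  have hxV : ∀ x, x ∈ V x := fun x => ⟨(hU x).1, by simp⟩
  have hW : IsOpen ((⋃ x ∈ F, V x).powerset ∩ ⋂ x ∈ F, {G | (G ∩ V x).Nonempty}) :=
    (isOpen_biUnion fun x _ => hV x).powerset_vietoris.inter
      (hF.isOpen_biInter fun x _ => isOpen_inter_nonempty_of_isOpen (hV x))
  refine mem_of_superset (hW.mem_nhds ⟨fun y hy => mem_biUnion hy (hxV y),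
    mem_iInter₂.2 fun x hx => ⟨x, hx, hxV x⟩⟩) ?_
  rintro _ ⟨hfV, hVf⟩ ⟨f, hf, rfl⟩
  choose g hgF hfg using fun i => mem_iUnion₂.1 (hfV (mem_range_self i))
  have hgC : ∀ i, g i ∈ C i := fun i =>
    by_contra fun h => (hfg i).2 (mem_biUnion h (hf i trivial))
  refine hFC ⟨g, fun i _ => hgC i, subset_antisymm (range_subset_iff.2 hgF) fun x hx => ?_⟩
  obtain ⟨_, ⟨i, rfl⟩, hfx⟩ := mem_iInter₂.1 hVf x hx
  exact ⟨i, hdisj.elim (hgF i) hx (not_disjoint_iff.2 ⟨f i, (hfg i).1, hfx.1⟩)⟩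

end TopologicalSpace.vietoris

namespace FinHypN

variable {n : ℕ} {X : Type*}

/-- The map `φₙ(x₁, …, xₙ) = {x₁, …, xₙ}`. -/
def ofFun (hn : 0 < n) (f : Fin n → X) : FinHypN n X :=
  ⟨range f, ⟨f ⟨0, hn⟩, mem_range_self _⟩, by
    simpa [← image_univ] using encard_image_le f univ⟩

theorem ext {F G : FinHypN n X} (h : (F : Set X) = G) : F = G :=
  Subtype.ext h

theorem exists_range_eq (F : FinHypN n X) : ∃ f : Fin n → X, range f = (F : Set X) := by
  obtain ⟨x, hx⟩ := F.2.1
  obtain ⟨m, g, hg, hgF⟩ := (finite_of_encard_le_coe F.2.2).fin_param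
  have hmn : m ≤ n := by
    have hcard := hg.encard_range.trans (hgF ▸ F.2.2 : (range g).encard ≤ n)
    simpa [ENat.card_eq_coe_fintype_card] using hcard
  have hm : 0 < m := by
    obtain ⟨j, -⟩ := hgF ▸ hx
    exact j.pos
  refine ⟨fun i => g ⟨min i (m - 1), by omega⟩, subset_antisymm ?_ fun y hy => ?_⟩
  · rw [← hgF]; exact range_subset_iff.2 fun i => mem_range_self _
  · obtain ⟨j, rfl⟩ := hgF ▸ hy
    exact ⟨⟨j, by omega⟩, congrArg g (Fin.ext (by simp; omega))⟩

theorem ofFun_surjective (hn : 0 < n) : Function.Surjective (ofFun (X := X) hn) := fun F =>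
  (exists_range_eq F).imp fun _ => ext

theorem setOf_exists_range_eq (hn : 0 < n) (C : Fin n → Set X) :
    {F : FinHypN n X | ∃ f : Fin n → X, (∀ i, f i ∈ C i) ∧ (F : Set X) = range f} =
      ofFun hn '' univ.pi C := by
  ext F
  constructor
  · rintro ⟨f, hf, hF⟩
    exact ⟨f, fun i _ => hf i, ext hF.symm⟩
  · rintro ⟨f, hf, rfl⟩
    exact ⟨f, fun i => hf i trivial, rfl⟩

variable [TopologicalSpace X]

theorem isInducing_coe : IsInducing (fun F : FinHypN n X => (F : Set X)) :=
  ⟨congrArg _ (vietoris_eq_topologicalSpace_vietoris X)⟩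

theorem continuous_ofFun (hn : 0 < n) : Continuous (ofFun (X := X) hn) :=
  isInducing_coe.continuous_iff.2 <| by
    exact TopologicalSpace.vietoris.continuous_range_of_finite (ι := Fin n)

theorem isClosed_image_ofFun_pi [T2Space X] (hn : 0 < n) {C : Fin n → Set X}
    (hC : ∀ i, IsClosed (C i)) : IsClosed (ofFun hn '' univ.pi C) := by
  rw [← isOpen_compl_iff, isOpen_iff_mem_nhds]
  intro F hF
  have hFC : (F : Set X) ∉ range '' univ.pi C := fun ⟨f, hf, hfF⟩ => hF ⟨f, hf, ext hfF⟩
  rw [isInducing_coe.nhds_eq_comap]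
  refine mem_comap.2 ⟨_, TopologicalSpace.vietoris.compl_image_range_pi_mem_nhds hC
    (finite_of_encard_le_coe F.2.2) hFC, ?_⟩
  rintro _ hG ⟨f, hf, rfl⟩
  exact hG ⟨f, hf, rfl⟩

end FinHypN

namespace IsSierpinskiStratification

variable {X A : Type*} [TopologicalSpace X] {T : Set (List A)} {Xs : List A → Set X}

theorem nil_mem (hT : IsSierpinskiStratification T Xs) : [] ∈ T :=
  let ⟨l, hl⟩ := hT.nonempty
  hT.prefix_closed l hl [] l.nil_prefix

theorem mem_iff_exists_succ (hT : IsSierpinskiStratification T Xs) {s : List A} (hs : s ∈ T)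
    {x : X} : x ∈ Xs s ↔ ∃ a, s ++ [a] ∈ T ∧ x ∈ Xs (s ++ [a]) := by
  rw [hT.succ_eq s hs]
  simp

theorem image {Y : Type*} [TopologicalSpace Y] (hT : IsSierpinskiStratification T Xs)
    {f : X → Y} (hf : Continuous f) (hsurj : Function.Surjective f)
    (hclosed : ∀ s ∈ T, IsClosed (f '' Xs s)) :
    IsSierpinskiStratification T fun s => f '' Xs s where
  countable_alphabet := hT.countable_alphabet
  nonempty := hT.nonempty
  prefix_closed := hT.prefix_closed
  isClosed := hclosed
  root := by rw [hT.root, image_univ, hsurj.range_eq]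
  succ_eq s hs := by rw [hT.succ_eq s hs, image_iUnion₂]
  branch_converges σ hσ := by
    obtain ⟨p, hp⟩ := hT.branch_converges σ hσ
    exact ⟨f p, tendsto_smallSets_iff.1
      ((tendsto_image_smallSets.2 (hf.tendsto p)).comp (tendsto_smallSets_iff.2 hp))⟩

theorem pi {ι : Type*} [Finite ι] (hT : IsSierpinskiStratification T Xs) :
    IsSierpinskiStratification (X := ι → X) {l : List (ι → A) | ∀ i, l.map (· i) ∈ T}
      fun l => univ.pi fun i => Xs (l.map (· i)) where
  countable_alphabet := have := hT.countable_alphabet; inferInstance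
  nonempty := ⟨[], fun _ => hT.nil_mem⟩
  prefix_closed l hl l' hl' i := hT.prefix_closed _ (hl i) _ (hl'.map _)
  isClosed l hl := isClosed_set_pi fun i _ => hT.isClosed _ (hl i)
  root := by simp [hT.root]
  succ_eq l hl := by
    ext f
    rw [mem_univ_pi, mem_iUnion₂]
    constructor
    · intro hf
      choose a ha hfa using fun i => (hT.mem_iff_exists_succ (hl i)).1 (hf i)
      exact ⟨l ++ [a], ⟨fun i => by simpa using ha i, a, rfl⟩, fun i _ => by simpa using hfa i⟩
    · rintro ⟨_, ⟨ha, a, rfl⟩, hfa⟩ i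
      exact (hT.mem_iff_exists_succ (hl i)).2
        ⟨a i, by simpa using ha i, by simpa using hfa i trivial⟩
  branch_converges σ hσ := by
    have hσ' : ∀ i k, (List.range k).map (fun m => σ m i) ∈ T := fun i k => by
      simpa [List.map_map, Function.comp_def] using hσ k i
    choose p hp using fun i => hT.branch_converges _ (hσ' i)
    refine ⟨p, tendsto_smallSets_iff.1 (Tendsto.univ_pi_smallSets fun i => ?_)⟩
    simpa [List.map_map, Function.comp_def] using tendsto_smallSets_iff.2 (hp i)

end IsSierpinskiStratification

theorem finHypN_sierpinskiStratification_general {X A : Type*} [TopologicalSpace X]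
    [TopologicalSpace.MetrizableSpace X]
    (T : Set (List A)) (Xs : List A → Set X)
    (hT : IsSierpinskiStratification T Xs) (n : ℕ) (hn : 0 < n) :
    IsSierpinskiStratification
      (X := FinHypN n X)
      {l : List (Fin n → A) | ∀ i : Fin n, l.map (fun g => g i) ∈ T}
      (fun l => {F : FinHypN n X |
        ∃ f : Fin n → X, (∀ i, f i ∈ Xs (l.map (fun g => g i))) ∧ (F : Set X) = Set.range f}) := by
  simp only [FinHypN.setOf_exists_range_eq hn]
  exact hT.pi.image (FinHypN.continuous_ofFun hn) (FinHypN.ofFun_surjective hn) fun l hl =>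
    FinHypN.isClosed_image_ofFun_pi hn fun i => hT.isClosed _ (hl i)

/-- If `(Xs s)_{s ∈ T}` is a Sierpiński stratification of a separable metrizable space `X`
and `n ≥ 1`, then `(φₙ[Xs s₁ × ⋯ × Xs sₙ])_{s₁*⋯*sₙ ∈ Tⁿ}` is a Sierpiński stratification
of `ℱₙ(X)`.  A node of `Tⁿ` (an `n`-tuple `s₁*⋯*sₙ` of equal-length nodes of `T`, ordered
coordinatewise) is encoded as a finite sequence over the alphabet `Fin n → A`, whose `i`-th
coordinate projection must be a node of `T`. -/
theorem finHypN_sierpinskiStratification {X A : Type*} [TopologicalSpace X]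
    [TopologicalSpace.SeparableSpace X] [TopologicalSpace.MetrizableSpace X]
    (T : Set (List A)) (Xs : List A → Set X)
    (hT : IsSierpinskiStratification T Xs) (n : ℕ) (hn : 0 < n) :
    IsSierpinskiStratification
      (X := FinHypN n X)
      {l : List (Fin n → A) | ∀ i : Fin n, l.map (fun g => g i) ∈ T}
      (fun l => {F : FinHypN n X |
        ∃ f : Fin n → X, (∀ i, f i ∈ Xs (l.map (fun g => g i))) ∧ (F : Set X) = Set.range f}) :=
  finHypN_sierpinskiStratification_general T Xs hT n hn
end

section
/- Let 𝒦(ℓ²) denote the hyperspace of nonempty compact subsets of the real Hilbert space ℓ², equipped with the Hausdorff metric (equivalently, Vietoris) topology, which makes it a Polish space. Then the set { K ∈ 𝒦(ℓ²) : K ⊆ 𝔈 } of nonempty compact subsets of ℓ² contained in Erdős space 𝔈 is not a Borel subset of 𝒦(ℓ²). -/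
open Set Topology Filter

/-- Erdős space `𝔈`, as the subset of the real Hilbert space `ℓ²` consisting of the
square-summable sequences all of whose coordinates are rational. -/
def erdosSet : Set (lp (fun _ : ℕ => ℝ) 2) :=
  {x | ∀ n : ℕ, ∃ q : ℚ, x n = (q : ℝ)}

/-!
Fix a continuous `g : ℕ^ℕ → ℕ^ℕ` whose range is not Borel; it exists because diagonalising a
universal analytic set gives an analytic non-Borel set. For `x : ℕ^ℕ`, the finite sequences
`s` such that some `z` extending `s` has `g z` agreeing with `x` up to the length of `s` form a
tree whose infinite branches are exactly the `b` with `g b = x`. Send every node to a dyadic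
rational in `[0, 1]` so that the values along a branch converge to an irrational number (a
binary expansion with growing gaps), while a child whose last digit is large stays close to its
parent. The closure `K x` of the values of the tree is then a compact set depending continuously
on `x`, and a König-type argument shows that each irrational point of `K x` is the limit along
a branch. So `K x ⊆ ℚ` iff `x ∉ range g`, and after placing `ℝ` on the first axis of `ℓ²` the
set `{K | K ⊆ 𝔈}` pulls back to the complement of `range g`.
-/

open MeasureTheory PiNat TopologicalSpace

theorem exists_isClosed_universal (X : Type*) [TopologicalSpace X] [SecondCountableTopology X] :
    ∃ U : Set ((ℕ → ℕ) × X), IsClosed U ∧ ∀ C : Set X, IsClosed C → ∃ y, Prod.mk y ⁻¹' U = C := by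
  obtain ⟨b, hbc, -, hb⟩ := exists_countable_basis X
  obtain ⟨B, hB⟩ := (hbc.insert ∅).exists_eq_range (insert_nonempty _ _)
  have hB_open : ∀ n, IsOpen (B n) := fun n => by
    rcases (hB ▸ mem_range_self n : B n ∈ insert ∅ b) with h | h
    · simp [h]
    · exact hb.isOpen h
  refine ⟨{p | ∀ n, p.1 n ≠ 0 → p.2 ∉ B n}, ?_, fun C hC => ?_⟩
  · simp only [ofPred_forall, imp_iff_not_or, not_not, ofPred_or]
    exact isClosed_iInter fun n => (isClosed_eq (by fun_prop) continuous_const).union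
      ((hB_open n).isClosed_compl.preimage continuous_snd)
  · classical
    -- `y` marks the basic open sets that miss `C`
    refine ⟨fun n => if B n ⊆ Cᶜ then 1 else 0,
      Set.ext fun x => ⟨fun hx => ?_, fun hx n hn hxn => ?_⟩⟩
    · by_contra hxC
      obtain ⟨v, hvb, hxv, hvC⟩ := hb.exists_subset_of_mem_open hxC hC.isOpen_compl
      obtain ⟨n, rfl⟩ : v ∈ range B := hB ▸ mem_insert_of_mem _ hvb
      exact hx n (by simp [hvC]) hxv
    · dsimp only at hn hxn
      split_ifs at hn with h
      · exact h hxn hx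
      · exact hn rfl

theorem MeasureTheory.AnalyticSet.exists_isClosed_image_fst {X : Type*} [TopologicalSpace X]
    [T2Space X] {A : Set X} (hA : AnalyticSet A) :
    ∃ D : Set (X × (ℕ → ℕ)), IsClosed D ∧ Prod.fst '' D = A := by
  rw [AnalyticSet] at hA
  rcases hA with rfl | ⟨f, hf, rfl⟩
  · exact ⟨∅, isClosed_empty, image_empty _⟩
  · exact ⟨{p | f p.2 = p.1}, isClosed_eq (hf.comp continuous_snd) continuous_fst,
      by ext; simp⟩

theorem exists_analyticSet_universal (X : Type*) [TopologicalSpace X] [PolishSpace X] :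
    ∃ U : Set ((ℕ → ℕ) × X), AnalyticSet U ∧
      ∀ A : Set X, AnalyticSet A → ∃ y, Prod.mk y ⁻¹' U = A := by
  obtain ⟨C, hC, hC_univ⟩ := exists_isClosed_universal (X × (ℕ → ℕ))
  refine ⟨(fun p => (p.1, p.2.1)) '' C, hC.analyticSet.image_of_continuous (by fun_prop),
    fun A hA => ?_⟩
  obtain ⟨D, hD, rfl⟩ := hA.exists_isClosed_image_fst
  obtain ⟨y, rfl⟩ := hC_univ D hD
  exact ⟨y, by ext; simp⟩

theorem exists_analyticSet_not_measurableSet :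
    ∃ A : Set (ℕ → ℕ), AnalyticSet A ∧ ¬ MeasurableSet A := by
  obtain ⟨U, hU, hU_univ⟩ := exists_analyticSet_universal (ℕ → ℕ)
  refine ⟨(fun y => (y, y)) ⁻¹' U, hU.preimage (by fun_prop), fun hD => ?_⟩
  obtain ⟨y, hy⟩ := hU_univ _ hD.compl.analyticSet
  simpa using congrArg (y ∈ ·) hy

theorem exists_continuous_not_measurableSet_range :
    ∃ g : (ℕ → ℕ) → ℕ → ℕ, Continuous g ∧ ¬ MeasurableSet (range g) := by
  obtain ⟨A, hA, hA_not⟩ := exists_analyticSet_not_measurableSet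
  rw [AnalyticSet] at hA
  obtain hA | ⟨g, hg, rfl⟩ := hA
  · exact absurd (hA ▸ MeasurableSet.empty) hA_not
  · exact ⟨g, hg, hA_not⟩

lemma PiNat.res_suffix_res {α : Type*} (x : ℕ → α) {k n : ℕ} (h : k ≤ n) : res x k <:+ res x n := by
  induction n, h using Nat.le_induction with
  | base => exact List.suffix_refl _
  | succ n _ ih => exact ih.trans (by rw [res_succ]; exact List.suffix_cons _ _)

theorem PiNat.exists_forall_res_of_forall_exists_cons {α : Type*} {P : List α → Prop}
    (h₀ : P []) (h : ∀ s, P s → ∃ a, P (a :: s)) : ∃ b : ℕ → α, ∀ k, P (res b k) := by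
  choose f hf using h
  let L : ℕ → {s // P s} := fun n => Nat.rec ⟨[], h₀⟩ (fun _ s => ⟨f s.1 s.2 :: s.1, hf _ s.2⟩) n
  refine ⟨fun n => f (L n).1 (L n).2, fun k => ?_⟩
  suffices (L k).1 = res (fun n => f (L n).1 (L n).2) k from this ▸ (L k).2
  induction k with
  | zero => rfl
  | succ k ih => rw [res_succ, ← ih]

theorem PiNat.continuous_of_res_eq_dist_le {α E : Type*} [TopologicalSpace α] [DiscreteTopology α]
    [PseudoMetricSpace E] {f : (ℕ → α) → E}
    (h : ∀ x y N, res x N = res y N → dist (f x) (f y) ≤ 2⁻¹ ^ N) : Continuous f := by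
  refine Metric.continuous_iff'.2 fun x ε hε => ?_
  obtain ⟨N, hN⟩ := exists_pow_lt_of_lt_one hε (by norm_num : (2⁻¹ : ℝ) < 1)
  filter_upwards [(isOpen_cylinder _ x N).mem_nhds (self_mem_cylinder x N)] with y hy
  rw [cylinder_eq_res] at hy
  exact (h y x N hy).trans_lt hN

theorem irrational_of_forall_exists_int_lt {x : ℝ}
    (h : ∀ ε > 0, ∃ a N : ℤ, 0 < a * x - N ∧ a * x - N < ε) : Irrational x := by
  rintro ⟨q, rfl⟩
  have hd : (0 : ℝ) < q.den := by positivity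
  obtain ⟨a, N, hpos, hlt⟩ := h (1 / q.den) (by positivity)
  have hint : ((a * q.num - N * q.den : ℤ) : ℝ) = q.den * (a * q - N) := by
    push_cast
    rw [Rat.cast_def]
    field_simp
  have h0 : 0 < a * q.num - N * q.den := by
    exact_mod_cast hint ▸ mul_pos hd hpos
  have h1 : a * q.num - N * q.den < 1 := by
    have : (q.den : ℝ) * (a * q - N) < 1 := by
      rwa [lt_div_iff₀ hd, mul_comm] at hlt
    exact_mod_cast hint ▸ this
  omega

-- Nodes are lists read backwards, as in `PiNat.res`: `m :: s` is the child of `s` with last digit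
-- `m`. Squaring makes the exponent gaps along a chain grow, and the digit sum gives a child with
-- a large last digit a small weight.
def nodeExp (s : List ℕ) : ℕ := (s.length + s.sum) ^ 2

noncomputable def nodeWeight (s : List ℕ) : ℝ := 2⁻¹ ^ nodeExp s

noncomputable def nodeValue : List ℕ → ℝ
  | [] => 0
  | m :: s => nodeValue s + nodeWeight (m :: s)

lemma length_le_nodeExp (s : List ℕ) : s.length ≤ nodeExp s :=
  (Nat.le_add_right _ _).trans (Nat.le_self_pow two_ne_zero _)

lemma succ_le_nodeExp_cons (m : ℕ) (s : List ℕ) : m + 1 ≤ nodeExp (m :: s) := by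
  refine le_trans ?_ (Nat.le_self_pow two_ne_zero _)
  simp only [List.length_cons, List.sum_cons]
  omega

lemma nodeExp_add_le_nodeExp_cons (m : ℕ) (s : List ℕ) :
    nodeExp s + (2 * s.length + 1) ≤ nodeExp (m :: s) := by
  simp only [nodeExp, List.length_cons, List.sum_cons]
  nlinarith [Nat.zero_le m, Nat.zero_le s.sum]

lemma nodeWeight_pos (s : List ℕ) : 0 < nodeWeight s := by
  unfold nodeWeight; positivity

lemma two_pow_mul_nodeWeight (s : List ℕ) : 2 ^ nodeExp s * nodeWeight s = 1 := by
  rw [nodeWeight, inv_pow, mul_inv_cancel₀ (by positivity)]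

lemma nodeWeight_le (s : List ℕ) : nodeWeight s ≤ 2⁻¹ ^ s.length :=
  pow_le_pow_of_le_one (by norm_num) (by norm_num) (length_le_nodeExp s)

lemma nodeWeight_cons_le (m : ℕ) (s : List ℕ) : nodeWeight (m :: s) ≤ 2⁻¹ ^ (m + 1) :=
  pow_le_pow_of_le_one (by norm_num) (by norm_num) (succ_le_nodeExp_cons m s)

lemma nodeWeight_cons_le_mul (m : ℕ) (s : List ℕ) :
    nodeWeight (m :: s) ≤ nodeWeight s * 2⁻¹ ^ (2 * s.length + 1) := by
  rw [nodeWeight, nodeWeight, ← pow_add]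
  exact pow_le_pow_of_le_one (by norm_num) (by norm_num) (nodeExp_add_le_nodeExp_cons m s)

lemma nodeValue_le_append (r s : List ℕ) : nodeValue s ≤ nodeValue (r ++ s) := by
  induction r with
  | nil => rfl
  | cons m r ih => exact ih.trans (le_add_of_nonneg_right (nodeWeight_pos _).le)

-- the weights at least halve at each step of a chain
lemma nodeValue_append_sub_add_le (r s : List ℕ) :
    nodeValue (r ++ s) - nodeValue s + nodeWeight (r ++ s) ≤ nodeWeight s := by
  induction r with
  | nil => simp
  | cons m r ih =>
    have h := nodeWeight_cons_le_mul m (r ++ s)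
    have h2 : (2⁻¹ : ℝ) ^ (2 * (r ++ s).length + 1) ≤ 2⁻¹ :=
      pow_le_of_le_one (by norm_num) (by norm_num) (by omega)
    have h3 := nodeWeight_pos (r ++ s)
    simp only [List.cons_append, nodeValue]
    nlinarith

lemma dist_nodeValue_append_le (r s : List ℕ) :
    dist (nodeValue (r ++ s)) (nodeValue s) ≤ nodeWeight s := by
  rw [Real.dist_eq, abs_of_nonneg (sub_nonneg.2 (nodeValue_le_append r s))]
  linarith [nodeValue_append_sub_add_le r s, nodeWeight_pos (r ++ s)]

lemma nodeValue_mem_Icc (s : List ℕ) : nodeValue s ∈ Icc (0 : ℝ) 1 := by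
  have h := nodeValue_append_sub_add_le s []
  have h0 := nodeValue_le_append s []
  have h1 : nodeWeight [] = 1 := by simp [nodeWeight, nodeExp]
  simp only [List.append_nil, nodeValue] at h h0
  exact ⟨h0, by linarith [nodeWeight_pos s]⟩

lemma exists_nodeValue_mul_eq_int (s : List ℕ) : ∃ N : ℤ, nodeValue s * 2 ^ nodeExp s = N := by
  induction s with
  | nil => exact ⟨0, by simp [nodeValue]⟩
  | cons m s ih =>
    obtain ⟨N, hN⟩ := ih
    have hle : nodeExp s ≤ nodeExp (m :: s) :=
      le_of_add_le_left (nodeExp_add_le_nodeExp_cons m s)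
    refine ⟨N * 2 ^ (nodeExp (m :: s) - nodeExp s) + 1, ?_⟩
    have hsplit : (2 : ℝ) ^ nodeExp (m :: s) =
        2 ^ nodeExp s * 2 ^ (nodeExp (m :: s) - nodeExp s) := by
      rw [← pow_add, Nat.add_sub_cancel' hle]
    rw [nodeValue, add_mul, mul_comm (nodeWeight _), two_pow_mul_nodeWeight, hsplit, ← mul_assoc,
      hN]
    push_cast
    ring

lemma nodeValue_mem_range_ratCast (s : List ℕ) : nodeValue s ∈ range ((↑) : ℚ → ℝ) := by
  obtain ⟨N, hN⟩ := exists_nodeValue_mul_eq_int s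
  refine ⟨N / 2 ^ nodeExp s, ?_⟩
  push_cast
  rw [← hN, mul_div_cancel_right₀ _ (by positivity)]

noncomputable def branchValue (b : ℕ → ℕ) : ℝ := ∑' k, nodeWeight (res b (k + 1))

lemma nodeValue_res (b : ℕ → ℕ) (k : ℕ) :
    nodeValue (res b k) = ∑ j ∈ Finset.range k, nodeWeight (res b (j + 1)) := by
  induction k with
  | zero => rfl
  | succ k ih => rw [Finset.sum_range_succ, ← ih, res_succ, nodeValue, ← res_succ]

lemma tendsto_nodeValue_res (b : ℕ → ℕ) :
    Tendsto (fun k => nodeValue (res b k)) atTop (𝓝 (branchValue b)) := by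
  have hsum : Summable fun k => nodeWeight (res b (k + 1)) := by
    refine Summable.of_nonneg_of_le (fun k => (nodeWeight_pos _).le) (fun k => ?_)
      (summable_geometric_of_lt_one (by norm_num : (0 : ℝ) ≤ 2⁻¹) (by norm_num))
    exact (nodeWeight_le _).trans
      (pow_le_pow_of_le_one (by norm_num) (by norm_num) (by rw [res_length]; omega))
  simpa only [nodeValue_res, branchValue] using hsum.hasSum.tendsto_sum_nat

lemma branchValue_sub_nodeValue_res_le (b : ℕ → ℕ) (k : ℕ) :
    branchValue b - nodeValue (res b k) ≤ nodeWeight (res b k) := by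
  refine sub_le_iff_le_add'.2 (le_of_tendsto (tendsto_nodeValue_res b) ?_)
  filter_upwards [eventually_ge_atTop k] with n hn
  obtain ⟨r, hr⟩ := res_suffix_res b hn
  have := dist_nodeValue_append_le r (res b k)
  rw [hr, Real.dist_eq] at this
  linarith [le_abs_self (nodeValue (res b n) - nodeValue (res b k))]

lemma nodeWeight_res_succ_le_branchValue_sub (b : ℕ → ℕ) (k : ℕ) :
    nodeWeight (res b (k + 1)) ≤ branchValue b - nodeValue (res b k) := by
  refine le_sub_iff_add_le'.2 (ge_of_tendsto (tendsto_nodeValue_res b) ?_)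
  filter_upwards [eventually_ge_atTop (k + 1)] with n hn
  obtain ⟨r, hr⟩ := res_suffix_res b hn
  have := nodeValue_le_append r (res b (k + 1))
  rwa [hr, res_succ, nodeValue, ← res_succ] at this

-- `2 ^ nodeExp (res b k)` clears the denominator of the `k`-th partial sum, and the next exponent
-- is larger by more than `2 * k`
theorem irrational_branchValue (b : ℕ → ℕ) : Irrational (branchValue b) := by
  refine irrational_of_forall_exists_int_lt fun ε hε => ?_
  obtain ⟨k, hk⟩ := exists_pow_lt_of_lt_one hε (by norm_num : (2⁻¹ : ℝ) < 1)
  obtain ⟨N, hN⟩ := exists_nodeValue_mul_eq_int (res b k)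
  have hmul : ((2 ^ nodeExp (res b k) : ℤ) : ℝ) * branchValue b - N =
      2 ^ nodeExp (res b k) * (branchValue b - nodeValue (res b k)) := by
    push_cast; rw [← hN]; ring
  have hlow := nodeWeight_res_succ_le_branchValue_sub b k
  have hup : branchValue b - nodeValue (res b k) ≤ 2 * nodeWeight (res b (k + 1)) := by
    have := branchValue_sub_nodeValue_res_le b (k + 1)
    rw [res_succ, nodeValue, ← res_succ] at this
    linarith
  have hstep := nodeWeight_cons_le_mul (b k) (res b k)
  rw [← res_succ, res_length] at hstep
  refine ⟨2 ^ nodeExp (res b k), N, ?_, ?_⟩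
  · rw [hmul]
    exact mul_pos (by positivity) ((nodeWeight_pos _).trans_le hlow)
  · rw [hmul]
    calc 2 ^ nodeExp (res b k) * (branchValue b - nodeValue (res b k))
        ≤ 2 ^ nodeExp (res b k) * (2 * (nodeWeight (res b k) * 2⁻¹ ^ (2 * k + 1))) := by
          gcongr; linarith
      _ = (2⁻¹ : ℝ) ^ (2 * k) := by
          rw [pow_succ]; linear_combination (2⁻¹ : ℝ) ^ (2 * k) * two_pow_mul_nodeWeight (res b k)
      _ ≤ 2⁻¹ ^ k := pow_le_pow_of_le_one (by norm_num) (by norm_num) (by omega)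
      _ < ε := hk

section FiberTree

variable {α β : Type*}

def fiberTree (g : (ℕ → α) → ℕ → β) (x : ℕ → β) : Set (List α) :=
  {s | ∃ z, res z s.length = s ∧ res (g z) s.length = res x s.length}

variable {g : (ℕ → α) → ℕ → β} {x x' : ℕ → β} {s t : List α}

lemma nil_mem_fiberTree [Nonempty α] : [] ∈ fiberTree g x :=
  ⟨Classical.arbitrary _, rfl, rfl⟩

lemma mem_fiberTree_of_suffix (hst : s <:+ t) (ht : t ∈ fiberTree g x) : s ∈ fiberTree g x := by
  obtain ⟨z, hzt, hgz⟩ := ht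
  have hlen := hst.length_le
  refine ⟨z, ?_, res_eq_res.2 fun m hm => res_eq_res.1 hgz (hm.trans_le hlen)⟩
  have hsuf : res z s.length <:+ t := hzt ▸ res_suffix_res z hlen
  exact (List.suffix_of_suffix_length_le hsuf hst (by rw [res_length])).eq_of_length
    (res_length _ _)

lemma mem_fiberTree_congr {n : ℕ} (h : res x n = res x' n) (hs : s.length ≤ n)
    (hx : s ∈ fiberTree g x) : s ∈ fiberTree g x' := by
  obtain ⟨z, hzs, hgz⟩ := hx
  exact ⟨z, hzs, hgz.trans (res_eq_res.2 fun m hm => res_eq_res.1 h (hm.trans_le hs))⟩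

lemma res_mem_fiberTree (b : ℕ → α) (k : ℕ) : res b k ∈ fiberTree g (g b) :=
  ⟨b, by rw [res_length], rfl⟩

lemma eq_of_forall_res_mem_fiberTree [TopologicalSpace α] [TopologicalSpace β] [T2Space β]
    (hg : Continuous g) {b : ℕ → α} (h : ∀ k, res b k ∈ fiberTree g x) : g b = x := by
  choose z hz using h
  simp only [res_length] at hz
  have hzb : Tendsto z atTop (𝓝 b) := tendsto_pi_nhds.2 fun i =>
    tendsto_const_nhds.congr' <| (eventually_gt_atTop i).mono fun k hk =>
      (res_eq_res.1 (hz k).1 hk).symm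
  funext i
  refine tendsto_nhds_unique (((continuous_apply i).comp hg).continuousAt.tendsto.comp hzb)
    (tendsto_const_nhds.congr' <| (eventually_gt_atTop i).mono fun k hk => ?_)
  exact (res_eq_res.1 (hz k).2 hk).symm

end FiberTree

section ValuesAbove

def valuesAbove (T : Set (List ℕ)) (s : List ℕ) : Set ℝ := nodeValue '' {t ∈ T | s <:+ t}

variable {T : Set (List ℕ)} {s : List ℕ} {y : ℝ}

lemma valuesAbove_nil (T : Set (List ℕ)) : valuesAbove T [] = nodeValue '' T := by
  simp [valuesAbove]

lemma valuesAbove_subset (T : Set (List ℕ)) (s : List ℕ) (M : ℕ) :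
    valuesAbove T s ⊆ ({nodeValue s} ∪ ⋃ m ∈ Finset.range M, valuesAbove T (m :: s)) ∪
      Metric.closedBall (nodeValue s) (2⁻¹ ^ M) := by
  rintro _ ⟨t, ⟨htT, r, rfl⟩, rfl⟩
  rcases List.eq_nil_or_concat' r with rfl | ⟨r, m, rfl⟩
  · exact Or.inl (Or.inl rfl)
  rw [List.append_assoc, List.singleton_append] at htT ⊢
  by_cases hm : m < M
  · exact Or.inl (Or.inr (mem_biUnion (Finset.mem_range.2 hm) ⟨_, ⟨htT, r, rfl⟩, rfl⟩))
  refine Or.inr (Metric.mem_closedBall.2 ?_)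
  have hcons : dist (nodeValue (m :: s)) (nodeValue s) = nodeWeight (m :: s) := by
    rw [nodeValue, Real.dist_eq, add_sub_cancel_left, abs_of_pos (nodeWeight_pos _)]
  calc dist (nodeValue (r ++ m :: s)) (nodeValue s)
      ≤ nodeWeight (m :: s) + nodeWeight (m :: s) :=
        (dist_triangle _ _ _).trans (add_le_add (dist_nodeValue_append_le r _) hcons.le)
    _ ≤ 2⁻¹ ^ (m + 1) + 2⁻¹ ^ (m + 1) :=
        add_le_add (nodeWeight_cons_le m s) (nodeWeight_cons_le m s)
    _ = 2⁻¹ ^ m := by ring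
    _ ≤ 2⁻¹ ^ M := pow_le_pow_of_le_one (by norm_num) (by norm_num) (not_lt.1 hm)

lemma exists_mem_closure_valuesAbove_cons (hy : y ∈ closure (valuesAbove T s))
    (hys : y ≠ nodeValue s) : ∃ m, y ∈ closure (valuesAbove T (m :: s)) := by
  by_contra! h
  refine hys (eq_of_forall_dist_le fun ε hε => ?_)
  obtain ⟨M, hM⟩ := exists_pow_lt_of_lt_one hε (by norm_num : (2⁻¹ : ℝ) < 1)
  have hy' := closure_mono (valuesAbove_subset T s M) hy
  rw [closure_union, closure_union, Finset.closure_biUnion, closure_singleton,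
    Metric.isClosed_closedBall.closure_eq] at hy'
  rcases hy' with (hy' | hy') | hy'
  · exact absurd hy' hys
  · obtain ⟨m, -, hm⟩ := mem_iUnion₂.1 hy'
    exact absurd hm (h m)
  · exact (Metric.mem_closedBall.1 hy').trans hM.le

-- König's argument; being irrational, `y` is never a node value
lemma exists_forall_mem_closure_valuesAbove_res (hy : y ∈ closure (nodeValue '' T))
    (hirr : Irrational y) : ∃ b : ℕ → ℕ, ∀ k, y ∈ closure (valuesAbove T (res b k)) :=
  exists_forall_res_of_forall_exists_cons (P := fun s => y ∈ closure (valuesAbove T s))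
    (by rwa [valuesAbove_nil]) fun s hs => exists_mem_closure_valuesAbove_cons hs
      fun h => hirr (h ▸ nodeValue_mem_range_ratCast s)

lemma mem_of_mem_closure_valuesAbove (hT : ∀ u v, u <:+ v → v ∈ T → u ∈ T)
    (hy : y ∈ closure (valuesAbove T s)) : s ∈ T := by
  obtain ⟨_, ⟨t, ⟨htT, hst⟩, -⟩⟩ := closure_nonempty_iff.1 ⟨y, hy⟩
  exact hT s t hst htT

end ValuesAbove

section FiberTreeCompact

variable {g : (ℕ → ℕ) → ℕ → ℕ}

noncomputable def fiberTreeCompact (g : (ℕ → ℕ) → ℕ → ℕ) (x : ℕ → ℕ) : NonemptyCompacts ℝ :=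
  ⟨⟨closure (nodeValue '' fiberTree g x), isCompact_Icc.of_isClosed_subset isClosed_closure
      (closure_minimal (image_subset_iff.2 fun s _ => nodeValue_mem_Icc s) isClosed_Icc)⟩,
    (nonempty_of_mem (mem_image_of_mem nodeValue nil_mem_fiberTree)).closure⟩

lemma exists_mem_fiberTree_dist_le {x x' : ℕ → ℕ} {N : ℕ} (h : res x N = res x' N)
    {t : List ℕ} (ht : t ∈ fiberTree g x) :
    ∃ s ∈ fiberTree g x', dist (nodeValue t) (nodeValue s) ≤ 2⁻¹ ^ N := by
  by_cases htN : t.length ≤ N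
  · exact ⟨t, mem_fiberTree_congr h htN ht, by simp⟩
  set s := t.drop (t.length - N)
  have hs : s.length = N := by simp only [s, List.length_drop]; omega
  refine ⟨s, mem_fiberTree_congr h hs.le (mem_fiberTree_of_suffix (List.drop_suffix _ _) ht), ?_⟩
  calc dist (nodeValue t) (nodeValue s)
      = dist (nodeValue (t.take (t.length - N) ++ s)) (nodeValue s) := by
        rw [List.take_append_drop]
    _ ≤ nodeWeight s := dist_nodeValue_append_le _ _
    _ ≤ 2⁻¹ ^ N := hs ▸ nodeWeight_le s

lemma continuous_fiberTreeCompact : Continuous (fiberTreeCompact g) := by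
  refine continuous_of_res_eq_dist_le fun x x' N h => ?_
  rw [Metric.NonemptyCompacts.dist_eq]
  refine (Metric.hausdorffDist_closure).trans_le (Metric.hausdorffDist_le_of_mem_dist
    (by positivity) ?_ ?_)
  · simpa only [forall_mem_image, exists_mem_image] using
      fun t ht => exists_mem_fiberTree_dist_le h ht
  · simpa only [forall_mem_image, exists_mem_image] using
      fun t ht => exists_mem_fiberTree_dist_le h.symm ht

lemma fiberTreeCompact_subset_range_ratCast_iff (hg : Continuous g) (x : ℕ → ℕ) :
    (fiberTreeCompact g x : Set ℝ) ⊆ range ((↑) : ℚ → ℝ) ↔ x ∉ range g := by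
  refine ⟨?_, fun hx y hy => by_contra fun hirr => ?_⟩
  · rintro h ⟨b, rfl⟩
    exact irrational_branchValue b (h (mem_closure_of_tendsto (tendsto_nodeValue_res b)
      (Eventually.of_forall fun k => mem_image_of_mem _ (res_mem_fiberTree b k))))
  obtain ⟨b, hb⟩ := exists_forall_mem_closure_valuesAbove_res hy hirr
  exact hx ⟨b, eq_of_forall_res_mem_fiberTree hg fun k =>
    mem_of_mem_closure_valuesAbove (fun _ _ => mem_fiberTree_of_suffix) (hb k)⟩

end FiberTreeCompact

theorem TopologicalSpace.NonemptyCompacts.isometry_map {X Y : Type*} [MetricSpace X]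
    [MetricSpace Y] {e : X → Y} (he : Isometry e) :
    Isometry (NonemptyCompacts.map e he.continuous) :=
  Isometry.of_dist_eq fun K L => by
    simp only [Metric.NonemptyCompacts.dist_eq, NonemptyCompacts.coe_map,
      Metric.hausdorffDist_image he]

lemma preimage_single_erdosSet : lp.single 2 0 ⁻¹' erdosSet = range ((↑) : ℚ → ℝ) := by
  ext t
  refine ⟨fun h => ?_, ?_⟩
  · obtain ⟨q, hq⟩ := h 0
    exact ⟨q, by rw [← hq, lp.single_apply_self]⟩
  · rintro ⟨q, rfl⟩ n
    rcases eq_or_ne n 0 with rfl | hn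
    · exact ⟨q, lp.single_apply_self _ _ _⟩
    · exact ⟨0, by rw [lp.single_apply_ne _ _ _ hn, Rat.cast_zero]⟩

/-- The set `{K ∈ 𝒦(ℓ²) : K ⊆ 𝔈}` of nonempty compact subsets of `ℓ²` contained in Erdős
space is not a Borel subset of the Polish space `𝒦(ℓ²)` of nonempty compact subsets of
`ℓ²` with the Hausdorff metric (equivalently, Vietoris) topology. -/
theorem compactsSubsetErdos_not_borel :
    ¬ @MeasurableSet (TopologicalSpace.NonemptyCompacts (lp (fun _ : ℕ => ℝ) 2))
      (borel (TopologicalSpace.NonemptyCompacts (lp (fun _ : ℕ => ℝ) 2)))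
      {K : TopologicalSpace.NonemptyCompacts (lp (fun _ : ℕ => ℝ) 2) |
        (K : Set (lp (fun _ : ℕ => ℝ) 2)) ⊆ erdosSet} := by
  let : MeasurableSpace (NonemptyCompacts (lp (fun _ : ℕ => ℝ) 2)) := borel _
  have : BorelSpace (NonemptyCompacts (lp (fun _ : ℕ => ℝ) 2)) := ⟨rfl⟩
  intro hS
  obtain ⟨g, hg, hg_range⟩ := exists_continuous_not_measurableSet_range
  have he := lp.isometry_single (E := fun _ : ℕ => ℝ) (p := 2) 0
  let F := NonemptyCompacts.map _ he.continuous ∘ fiberTreeCompact g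
  have hF : Continuous F :=
    (NonemptyCompacts.isometry_map he).continuous.comp continuous_fiberTreeCompact
  have hpre : F ⁻¹' {K | (K : Set (lp (fun _ : ℕ => ℝ) 2)) ⊆ erdosSet} = (range g)ᶜ := by
    ext x
    simp only [F, mem_preimage, mem_ofPred_eq, Function.comp_apply, NonemptyCompacts.coe_map,
      image_subset_iff, preimage_single_erdosSet, mem_compl_iff]
    exact fiberTreeCompact_subset_range_ratCast_iff hg x
  exact hg_range (by simpa [hpre] using (hF.measurable hS).compl)
end
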